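/- arXiv:1407.7120 — 3 statements merged into one kernel-verified Lean document; each statement's English description precedes it below -/
import Mathlib

section
/- Let m ≥ 2 be an integer, 2m < p ≤ ∞, and let q₁,...,q_m ∈ [p/(p-m), 2] satisfy ∑_{j=1}^m 1/q_j = (mp+p-2m)/(2p). Then for every s ∈ (max_i q_i, 2], the vector (1/q₁,...,1/q_m) lies in the convex hull in ℝ^m of the m vectors v₁,...,v_m, where v_i has coordinate 1/λ_{m,s} in position i and 1/s in all other positions, with λ_{m,s} = 2ps/(mps+ps+2p-2mp-2ms). -/
/-!
The vectors `vᵢ = (1/s, …, 1/λ, …, 1/s)` are `(1/s)·𝟙 + (1/λ - 1/s)·eᵢ`, so their convex hull is a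
translated and scaled standard simplex: it consists of the vectors `x` with `x ≥ 1/s` coordinatewise
and `∑ₖ (xₖ - 1/s) = 1/λ - 1/s`. For `x = (1/q₁, …, 1/qₘ)` the first condition is `qᵢ < s`, and the
second is the constraint on `∑ 1/qⱼ` rewritten with the formula for `λ`.
-/

open Finset

theorem mem_convexHull_range_ite {𝕜 ι : Type*} [Field 𝕜] [LinearOrder 𝕜] [IsStrictOrderedRing 𝕜]
    [Fintype ι] [DecidableEq ι] {a b : 𝕜} (hab : a ≠ b) {x : ι → 𝕜} (hx : ∀ k, a ≤ x k)
    (hsum : ∑ k, (x k - a) = b - a) :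
    x ∈ convexHull 𝕜 (Set.range fun i k => if k = i then b else a) := by
  have hba : 0 < b - a :=
    (hsum ▸ sum_nonneg fun k _ => sub_nonneg.2 (hx k)).lt_of_ne (sub_ne_zero.2 hab.symm).symm
  set c : ι → 𝕜 := fun i => (x i - a) / (b - a)
  have hc_nonneg : ∀ i ∈ univ, 0 ≤ c i := fun i _ => div_nonneg (sub_nonneg.2 (hx i)) hba.le
  have hc_sum : ∑ i, c i = 1 := by rw [← sum_div, hsum, div_self hba.ne']
  have hx_eq : x = ∑ i, c i • fun k => if k = i then b else a := by
    funext k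
    have hck : c k * (b - a) = x k - a := div_mul_cancel₀ _ hba.ne'
    have hterm : ∀ i, c i * (if k = i then b else a) = c i * a + if k = i then c i * (b - a) else 0 :=
      fun i => by split_ifs <;> ring
    simp only [Finset.sum_apply, Pi.smul_apply, smul_eq_mul, hterm, sum_add_distrib, ← sum_mul,
      hc_sum, sum_ite_eq, mem_univ, if_true, hck]
    ring
  rw [hx_eq]
  exact (convex_convexHull 𝕜 _).sum_mem hc_nonneg hc_sum
    fun i _ => subset_convexHull 𝕜 _ (Set.mem_range_self i)

theorem stmt_9_general (m : ℕ) (hm : 2 ≤ m) (p : ℝ) (hp : 2 * m < p)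
    (q : Fin m → ℝ) (hq : ∀ i, p / (p - m) ≤ q i ∧ q i ≤ 2)
    (hsum : ∑ j, 1 / q j = (m * p + p - 2 * m) / (2 * p))
    (s : ℝ) (hs1 : ∀ i, q i < s)
    (lam : ℝ) (hlam : lam = 2 * p * s / (m * p * s + p * s + 2 * p - 2 * m * p - 2 * m * s))
    (v : Fin m → Fin m → ℝ) (hv : ∀ i k, v i k = if k = i then 1 / lam else 1 / s) :
    (fun j => 1 / q j) ∈ convexHull ℝ (Set.range v) := by
  have i₀ : Fin m := ⟨0, by omega⟩
  have hp0 : 0 < p := by linarith [(Nat.cast_nonneg m : (0 : ℝ) ≤ m)]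
  have hq0 : ∀ i, 0 < q i := fun i =>
    (div_pos hp0 (by linarith [(Nat.cast_nonneg m : (0 : ℝ) ≤ m)])).trans_le (hq i).1
  have hs0 : 0 < s := (hq0 i₀).trans (hs1 i₀)
  have hgap : ∀ i, 1 / s < 1 / q i := fun i => one_div_lt_one_div_of_lt (hq0 i) (hs1 i)
  -- `1/λ = (m + 1)/2 - m/p + (1 - m)/s` and `∑ 1/qⱼ = (m + 1)/2 - m/p`
  have hgap_sum : ∑ i, (1 / q i - 1 / s) = 1 / lam - 1 / s := by
    rw [sum_sub_distrib, hsum, sum_const, card_univ, Fintype.card_fin, nsmul_eq_mul, hlam, one_div_div]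
    field_simp
    ring
  have hne : 1 / s ≠ 1 / lam := by
    refine (sub_pos.1 ?_).ne
    rw [← hgap_sum]
    exact sum_pos (fun i _ => sub_pos.2 (hgap i)) ⟨i₀, mem_univ _⟩
  obtain rfl : v = fun i k => if k = i then 1 / lam else 1 / s := funext₂ hv
  exact mem_convexHull_range_ite hne (fun k => (hgap k).le) hgap_sum

theorem stmt_9 (m : ℕ) (hm : 2 ≤ m) (p : ℝ) (hp : 2 * m < p)
    (q : Fin m → ℝ) (hq : ∀ i, p / (p - m) ≤ q i ∧ q i ≤ 2)
    (hsum : ∑ j, 1 / q j = (m * p + p - 2 * m) / (2 * p))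
    (s : ℝ) (hs1 : ∀ i, q i < s) (hs2 : s ≤ 2)
    (lam : ℝ) (hlam : lam = 2 * p * s / (m * p * s + p * s + 2 * p - 2 * m * p - 2 * m * s))
    (v : Fin m → Fin m → ℝ) (hv : ∀ i k, v i k = if k = i then 1 / lam else 1 / s) :
    (fun j => 1 / q j) ∈ convexHull ℝ (Set.range v) :=
  stmt_9_general m hm p hp q hq hsum s hs1 lam hlam v hv
end

section
/- Let m ≥ 2 be an integer. For all complex m-linear forms T : ℓ_∞^n × ⋯ × ℓ_∞^n → ℂ with the Bohnenblust–Hille constant bound B ≤ ∏_{j=2}^m Γ(2 - 1/j)^{j/(2-2j)}, one has ∏_{j=2}^m Γ(2 - 1/j)^{j/(2-2j)} < m^{(1-γ)/2}, where γ is the Euler–Mascheroni constant. -/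
/-! Since `(log Γ)' (2) = 1 - γ` and `(log Γ)'' = ψ' ≥ ψ'(2) = π²/6 - 1` on `(0, 2]`, one has
`log Γ (2 - d) ≥ (γ - 1) d + (π²/6 - 1) d²/2` for `0 ≤ d < 2`; this is read off termwise from
Euler's product `GammaSeq` via `-log (1 - u) ≥ u + u²/2`. For `d = 1/j` the `j`-th factor is then at most
`exp ((1 - γ)/(2(j - 1)) - (π²/6 - 1)/(4j(j - 1)))`, and the exponents sum to
`(1 - γ)/2 · H_{m-1} - (π²/6 - 1)/4 · (1 - 1/m)`. This beats `(1 - γ)/2 · log m` because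
`H_{m-1} - log m < γ` and `γ(1 - γ) ≤ 1/4` once `m ≥ 5`, and by explicit numerics for `m ≤ 4`. -/

open Filter Topology Finset Real
open scoped Nat

lemma add_sq_div_two_le_neg_log_one_sub {u : ℝ} (h0 : 0 ≤ u) (h1 : u < 1) :
    u + u ^ 2 / 2 ≤ -log (1 - u) := by
  have h := sum_le_hasSum (range 2) (fun n _ => by positivity)
    (hasSum_pow_div_log_of_abs_lt_one (by rwa [abs_of_nonneg h0]))
  norm_num [sum_range_succ] at h
  linarith

lemma div_add_sq_div_two_le_log_sub_log {a d : ℝ} (hd : 0 ≤ d) (hda : d < a) :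
    d / a + (d / a) ^ 2 / 2 ≤ log a - log (a - d) := by
  have ha : 0 < a := hd.trans_lt hda
  have h := add_sq_div_two_le_neg_log_one_sub (div_nonneg hd ha.le) ((div_lt_one ha).2 hda)
  rwa [one_sub_div ha.ne', log_div (by linarith) ha.ne', neg_sub] at h

lemma log_GammaSeq {x : ℝ} (hx : 0 < x) {n : ℕ} (hn : n ≠ 0) :
    log (GammaSeq x n) = x * log n + log n ! - ∑ k ∈ range (n + 1), log (x + k) := by
  have hpos : ∀ k ∈ range (n + 1), 0 < x + k := fun k _ => by positivity
  rw [GammaSeq, log_div (by positivity) (prod_pos hpos).ne',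
    log_mul (by positivity) (by positivity), log_rpow (by positivity), log_prod fun k hk => (hpos k hk).ne']

lemma sum_range_one_div_two_add (n : ℕ) :
    ∑ k ∈ range (n + 1), 1 / (2 + (k : ℝ)) = harmonic (n + 2) - 1 := by
  induction n with
  | zero => norm_num [harmonic_succ]
  | succ n ih =>
    rw [sum_range_succ, ih, harmonic_succ (n + 2)]
    push_cast
    ring

lemma tendsto_sum_range_one_div_two_add_sub_log :
    Tendsto (fun n : ℕ => ∑ k ∈ range (n + 1), 1 / (2 + (k : ℝ)) - log n) atTop
      (𝓝 (eulerMascheroniConstant - 1)) := by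
  have harm : Tendsto (fun n : ℕ => (harmonic (n + 2) : ℝ) - log (n + 2 : ℕ)) atTop
      (𝓝 eulerMascheroniConstant) :=
    tendsto_harmonic_sub_log.comp (tendsto_add_atTop_nat 2)
  have shift : Tendsto (fun n : ℕ => log ((n : ℝ) + 2) - log n) atTop (𝓝 0) :=
    (tendsto_log_comp_add_sub_log 2).comp tendsto_natCast_atTop_atTop
  convert (harm.add shift).sub_const 1 using 2 with n
  · rw [sum_range_one_div_two_add]
    push_cast
    ring
  · ring

lemma tendsto_sum_range_one_div_two_add_sq :
    Tendsto (fun n : ℕ => ∑ k ∈ range (n + 1), 1 / (2 + (k : ℝ)) ^ 2) atTop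
      (𝓝 (π ^ 2 / 6 - 1)) := by
  have h := ((hasSum_nat_add_iff' 2).2 hasSum_zeta_two).tendsto_sum_nat.comp
    (tendsto_add_atTop_nat 1)
  convert h using 2 with n
  · simp only [Function.comp_apply]
    push_cast
    ring_nf
  · norm_num [sum_range_succ]

lemma le_log_Gamma_two_sub {d : ℝ} (hd0 : 0 ≤ d) (hd2 : d < 2) :
    (eulerMascheroniConstant - 1) * d + (π ^ 2 / 6 - 1) / 2 * d ^ 2 ≤ log (Gamma (2 - d)) := by
  have lim_left := (tendsto_sum_range_one_div_two_add_sub_log.const_mul d).add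
    (tendsto_sum_range_one_div_two_add_sq.const_mul (d ^ 2 / 2))
  have lim_right := ((GammaSeq_tendsto_Gamma (2 - d)).log (Gamma_pos_of_pos (by linarith)).ne').sub
    ((GammaSeq_tendsto_Gamma 2).log (by norm_num [Gamma_two]))
  rw [Gamma_two, log_one, sub_zero] at lim_right
  suffices key : ∀ᶠ n : ℕ in atTop, d * (∑ k ∈ range (n + 1), 1 / (2 + (k : ℝ)) - log n) +
      d ^ 2 / 2 * ∑ k ∈ range (n + 1), 1 / (2 + (k : ℝ)) ^ 2 ≤
      log (GammaSeq (2 - d) n) - log (GammaSeq 2 n) by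
    linarith [le_of_tendsto_of_tendsto lim_left lim_right key]
  filter_upwards [eventually_ne_atTop 0] with n hn
  have hterm : ∀ k ∈ range (n + 1),
      d * (1 / (2 + (k : ℝ))) + d ^ 2 / 2 * (1 / (2 + (k : ℝ)) ^ 2) ≤
        log (2 + k) - log (2 - d + k) := by
    intro k _
    have := div_add_sq_div_two_le_log_sub_log hd0 (a := 2 + k)
      (by linarith [k.cast_nonneg (α := ℝ)])
    rw [show 2 + (k : ℝ) - d = 2 - d + k by ring, div_pow] at this
    convert this using 1
    ring
  have hsum := sum_le_sum hterm
  rw [sum_add_distrib, ← mul_sum, ← mul_sum, sum_sub_distrib] at hsum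
  rw [log_GammaSeq (by linarith) hn, log_GammaSeq two_pos hn]
  linarith

lemma log_Gamma_two_sub_one_div_mul_le {x : ℝ} (hx : 1 < x) :
    log (Gamma (2 - 1 / x)) * (x / (2 - 2 * x)) ≤
      (1 - eulerMascheroniConstant) / 2 / (x - 1) - (π ^ 2 / 6 - 1) / 4 / (x * (x - 1)) := by
  have hx0 : 0 < x := by linarith
  have hlow := le_log_Gamma_two_sub (d := 1 / x) (by positivity)
    (by rw [div_lt_iff₀ hx0]; linarith)
  have hexp : x / (2 - 2 * x) ≤ 0 := div_nonpos_of_nonneg_of_nonpos hx0.le (by linarith)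
  refine (mul_le_mul_of_nonpos_right hlow hexp).trans_eq ?_
  have : x - 1 ≠ 0 := by linarith
  have : 2 - 2 * x ≠ 0 := by linarith
  have : 1 - x ≠ 0 := by linarith
  field_simp
  ring

lemma sum_Icc_two_one_div_sub_one (m : ℕ) :
    ∑ j ∈ Icc 2 m, 1 / ((j : ℝ) - 1) = harmonic (m - 1) := by
  induction m with
  | zero => simp
  | succ m ih =>
    rcases Nat.eq_zero_or_pos m with rfl | hm
    · simp
    rw [sum_Icc_succ_top (by omega), ih, Nat.add_sub_cancel, ← Nat.sub_add_cancel hm,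
      harmonic_succ]
    push_cast [Nat.sub_add_cancel hm]
    ring

lemma sum_Icc_two_one_div_mul_sub_one {m : ℕ} (hm : 1 ≤ m) :
    ∑ j ∈ Icc 2 m, 1 / ((j : ℝ) * (j - 1)) = 1 - 1 / m := by
  induction m, hm using Nat.le_induction with
  | base => norm_num
  | succ m hm ih =>
    rw [sum_Icc_succ_top (by omega), ih]
    have : (m : ℝ) ≠ 0 := by positivity
    push_cast
    rw [add_sub_cancel_right]
    field_simp
    ring

lemma one_sub_eulerMascheroniConstant_mul_harmonic_sub_log_lt {m : ℕ} (hm : 2 ≤ m) :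
    (1 - eulerMascheroniConstant) * (harmonic (m - 1) - log m) <
      (π ^ 2 / 6 - 1) / 2 * (1 - 1 / m) := by
  have hγ₁ := one_half_lt_eulerMascheroniConstant
  have hγ₂ := eulerMascheroniConstant_lt_two_thirds
  have hC : 0.6432 < π ^ 2 / 6 - 1 := by nlinarith [pi_gt_d2]
  have hlog2 := log_two_gt_d9
  rcases lt_or_ge m 5 with h5 | h5
  · interval_cases m
    · norm_num [harmonic_succ]
      nlinarith
    · have hlog3 := div_add_sq_div_two_le_log_sub_log (a := 3) zero_le_one (by norm_num)
      norm_num [harmonic_succ] at hlog3 ⊢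
      nlinarith
    · have hlog4 : log 4 = 2 * log 2 := by
        rw [show (4 : ℝ) = 2 ^ 2 by norm_num, log_pow]; norm_num
      norm_num [harmonic_succ, hlog4]
      nlinarith
  · have hseq := eulerMascheroniSeq_lt_eulerMascheroniConstant (m - 1)
    rw [eulerMascheroniSeq, Nat.cast_sub (by omega), Nat.cast_one, sub_add_cancel] at hseq
    have hm5 : (5 : ℝ) ≤ m := by exact_mod_cast h5
    have : 1 / (m : ℝ) ≤ 1 / 5 := one_div_le_one_div_of_le (by norm_num) hm5
    nlinarith [sq_nonneg (eulerMascheroniConstant - 1 / 2)]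

theorem stmt_15 (m : ℕ) (hm : 2 ≤ m) :
    ∏ j ∈ Finset.Icc 2 m, Real.Gamma (2 - 1 / j) ^ ((j : ℝ) / (2 - 2 * j)) <
      (m : ℝ) ^ ((1 - Real.eulerMascheroniConstant) / 2) := by
  have hj : ∀ j ∈ Icc 2 m, 1 < (j : ℝ) := fun j hj => by
    exact_mod_cast (mem_Icc.1 hj).1
  calc ∏ j ∈ Icc 2 m, Gamma (2 - 1 / j) ^ ((j : ℝ) / (2 - 2 * j))
      = exp (∑ j ∈ Icc 2 m, log (Gamma (2 - 1 / j)) * ((j : ℝ) / (2 - 2 * j))) := by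
        rw [exp_sum]
        refine prod_congr rfl fun j hj' => rpow_def_of_pos (Gamma_pos_of_pos ?_) _
        have := one_div_lt_one_div_of_lt zero_lt_one (hj j hj')
        linarith
    _ ≤ exp ((1 - eulerMascheroniConstant) / 2 * harmonic (m - 1) -
          (π ^ 2 / 6 - 1) / 4 * (1 - 1 / m)) := by
        refine exp_le_exp.2 ((sum_le_sum fun j hj' =>
          log_Gamma_two_sub_one_div_mul_le (hj j hj')).trans_eq ?_)
        simp_rw [div_eq_mul_one_div ((1 - eulerMascheroniConstant) / 2),
          div_eq_mul_one_div ((π ^ 2 / 6 - 1) / 4)]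
        rw [sum_sub_distrib, ← mul_sum, ← mul_sum, sum_Icc_two_one_div_sub_one,
          sum_Icc_two_one_div_mul_sub_one (by omega)]
    _ < exp ((1 - eulerMascheroniConstant) / 2 * log m) := by
        have := one_sub_eulerMascheroniConstant_mul_harmonic_sub_log_lt hm
        exact exp_lt_exp.2 (by linarith)
    _ = (m : ℝ) ^ ((1 - eulerMascheroniConstant) / 2) := by
        rw [rpow_def_of_pos (by positivity), mul_comm]
end

section
/- Let m ≥ 3 be an integer. Then ∏_{j=2}^m Γ(2 - 1/j)^{j/(2-2j)} < (2/√π)^{m-1}. -/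
/-!
`log Γ` is strictly convex on `(0, ∞)`, and for `j ≥ 2` the point `3/2` is the convex
combination `(1 - θ) • 1 + θ • (2 - 1/j)` with `θ = j / (2j - 2)`. Since `Γ 1 = 1`, this gives
`Γ (3/2) ≤ Γ (2 - 1/j) ^ θ`, with equality only for `j = 2`; inverting, each factor of the
product is at most `Γ (3/2)⁻¹ = 2 / √π`, and strictly smaller for `j ≥ 3`.
-/

open Real Set

namespace Real

/-- Strictness comes from `log Γ x = log Γ (x + 1) - log x`: a convex function plus `-log`. -/
theorem strictConvexOn_log_Gamma : StrictConvexOn ℝ (Ioi 0) (log ∘ Gamma) := by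
  have hshift : ConvexOn ℝ (Ioi 0) (log ∘ Gamma ∘ fun x => x + 1) :=
    (convexOn_log_Gamma.translate_left 1).subset
      (fun x (hx : 0 < x) => show 0 < 1 + x by linarith) (convex_Ioi 0)
  refine (hshift.add_strictConvexOn strictConcaveOn_log_Ioi.neg).congr fun x (hx : 0 < x) => ?_
  simp only [Pi.add_apply, Pi.neg_apply, Function.comp_apply, Gamma_add_one hx.ne',
    log_mul hx.ne' (Gamma_pos_of_pos hx).ne']
  ring

theorem Gamma_one_sub_add_mul_lt_rpow {x θ : ℝ} (hx : 0 < x) (hx1 : x ≠ 1) (hθ0 : 0 < θ)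
    (hθ1 : θ < 1) : Gamma (1 - θ + θ * x) < Gamma x ^ θ := by
  have hlog := strictConvexOn_log_Gamma.2 (mem_Ioi.2 one_pos) (mem_Ioi.2 hx) hx1.symm
    (sub_pos.2 hθ1) hθ0 (sub_add_cancel 1 θ)
  simp only [Function.comp_apply, smul_eq_mul, mul_one, Gamma_one, log_one, mul_zero,
    zero_add] at hlog
  have hpos : 0 < Gamma (1 - θ + θ * x) := Gamma_pos_of_pos (by nlinarith)
  rw [rpow_def_of_pos (Gamma_pos_of_pos hx), mul_comm (log _), ← exp_log hpos]
  exact exp_lt_exp.2 hlog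

theorem Gamma_three_div_two : Gamma (3 / 2) = √π / 2 := by
  rw [show (3 / 2 : ℝ) = 1 / 2 + 1 by norm_num, Gamma_add_one (by norm_num), Gamma_one_half_eq]
  ring

end Real

theorem two_sub_one_div_natCast_pos (j : ℕ) : 0 < 2 - 1 / (j : ℝ) := by
  linarith [one_div (j : ℝ) ▸ Nat.cast_inv_le_one (α := ℝ) j]

theorem Gamma_two_sub_one_div_rpow_lt {j : ℕ} (hj : 3 ≤ j) :
    Gamma (2 - 1 / j) ^ ((j : ℝ) / (2 - 2 * j)) < 2 / √π := by
  have hj' : (3 : ℝ) ≤ j := by exact_mod_cast hj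
  set θ : ℝ := j / (2 * (j - 1))
  have hj0 : (j : ℝ) ≠ 0 := by positivity
  have hj1 : (j : ℝ) - 1 ≠ 0 := by linarith
  have hθ0 : 0 < θ := div_pos (by linarith) (by linarith)
  have hθ1 : θ < 1 := by rw [div_lt_one (by linarith)]; linarith
  have hx := two_sub_one_div_natCast_pos j
  have hx1 : 2 - 1 / (j : ℝ) ≠ 1 := by
    have : 1 / (j : ℝ) < 1 := (div_lt_one (by linarith)).2 (by linarith)
    exact ne_of_gt (by linarith)
  have hcomb : 1 - θ + θ * (2 - 1 / j) = 3 / 2 := by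
    simp only [θ]; field_simp; ring
  have key := Gamma_one_sub_add_mul_lt_rpow hx hx1 hθ0 hθ1
  rw [hcomb, Gamma_three_div_two] at key
  have hexp : (j : ℝ) / (2 - 2 * j) = -θ := by
    rw [show (2 : ℝ) - 2 * j = -(2 * (j - 1)) by ring, div_neg]
  rw [hexp, rpow_neg (Gamma_pos_of_pos hx).le, ← inv_div (√π)]
  exact inv_strictAnti₀ (by positivity) key

theorem Gamma_two_sub_one_div_rpow_le {j : ℕ} (hj : 2 ≤ j) :
    Gamma (2 - 1 / j) ^ ((j : ℝ) / (2 - 2 * j)) ≤ 2 / √π := by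
  obtain rfl | hj := hj.eq_or_lt
  · norm_num [Gamma_three_div_two, rpow_neg_one]
  · exact (Gamma_two_sub_one_div_rpow_lt hj).le

theorem stmt_16 (m : ℕ) (hm : 3 ≤ m) :
    ∏ j ∈ Finset.Icc 2 m, Real.Gamma (2 - 1 / j) ^ ((j : ℝ) / (2 - 2 * j)) <
      (2 / Real.sqrt Real.pi) ^ (m - 1) := by
  have hcard : m - 1 = (Finset.Icc 2 m).card := by simp only [Nat.card_Icc]; omega
  rw [hcard, ← Finset.prod_const]
  refine Finset.prod_lt_prod (fun j _ => ?_) (fun j hj => ?_)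
    ⟨3, ?_, Gamma_two_sub_one_div_rpow_lt le_rfl⟩
  · exact rpow_pos_of_pos (Gamma_pos_of_pos (two_sub_one_div_natCast_pos j)) _
  · exact Gamma_two_sub_one_div_rpow_le (Finset.mem_Icc.1 hj).1
  · exact Finset.mem_Icc.2 ⟨by norm_num, hm⟩
end
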